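/- arXiv:0809.0603 — 4 statements merged into one kernel-verified Lean document; each statement's English description precedes it below -/
import Mathlib

section
/- Let u be an aperiodic uniformly recurrent infinite word over a finite alphabet. Then every factor w of u has finite index, i.e., sup{r ∈ ℚ : w^r is a factor of u} < ∞. -/
/-!
If `w` had infinite index, arbitrarily long fractional powers of `w` would occur in `u`. By
uniform recurrence each prefix of `u` occurs inside such a power, hence agrees with the periodic
word `w w w ⋯` read from one of its `|w|` phases. Some phase serves infinitely many prefixes, so
`u` itself is `w w w ⋯` read from that phase, and is periodic.
-/

open Filter Topology

namespace SturmianPaper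

variable {A : Type*} [DecidableEq A]

/-- The factor `w` occurs in the infinite word `u` at position `i`. -/
def FactorAt (u : ℕ → A) (w : List A) (i : ℕ) : Prop :=
  w = (List.range w.length).map fun j => u (i + j)

/-- `w` is a factor of the infinite word `u`. -/
def IsFactor (u : ℕ → A) (w : List A) : Prop := ∃ i, FactorAt u w i

/-- The factor complexity of `u`: the number of factors of length `n`. -/
noncomputable def complexity (u : ℕ → A) (n : ℕ) : ℕ :=
  Set.ncard {w : List A | IsFactor u w ∧ w.length = n}

/-- A Sturmian word: complexity `n + 1` for every `n` (this forces aperiodicity). -/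
def IsSturmian (u : ℕ → A) : Prop := ∀ n, complexity u n = n + 1

/-- `u` is eventually periodic. -/
def EventuallyPeriodic (u : ℕ → A) : Prop :=
  ∃ p > 0, ∃ N, ∀ n ≥ N, u (n + p) = u n

/-- `u` is uniformly recurrent: every factor occurs with bounded gaps. -/
def UniformlyRecurrent (u : ℕ → A) : Prop :=
  ∀ w, IsFactor u w → ∃ B, ∀ k, ∃ i, k ≤ i ∧ i < k + B ∧ FactorAt u w i

/-- The number of occurrences of `w` in the finite word `x`. -/
def occCount (x w : List A) : ℕ :=
  ((List.range (x.length + 1)).filter fun i => decide (w <+: x.drop i)).length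

/-- `v` is a return word of the factor `w` of `u`. -/
def IsReturnWord (u : ℕ → A) (w v : List A) : Prop :=
  v ≠ [] ∧ IsFactor u (v ++ w) ∧ w <+: v ++ w ∧ occCount (v ++ w) w = 2

/-- Recurrence function: `R n + 1` is the maximal length of a complete return word
`v ++ w` over factors `w` of length `n` and return words `v` of `w`. -/
noncomputable def recFun (u : ℕ → A) (n : ℕ) : ℕ :=
  sSup {m | ∃ w v, IsFactor u w ∧ w.length = n ∧ IsReturnWord u w v ∧
    m + 1 = v.length + w.length}

/-- `v = w ^ (|v| / |w|)`: `v` is a fractional power of `w`,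
i.e. a prefix of `w w w ⋯` of length at least `|w|`. -/
def FracPow (w v : List A) : Prop :=
  w ≠ [] ∧ w.length ≤ v.length ∧ ∀ i < v.length, v[i]? = w[i % w.length]?

/-- The set of rational exponents `r` (viewed inside `ℝ`) such that `w ^ r ∈ L(u)`. -/
def expSet (u : ℕ → A) (w : List A) : Set ℝ :=
  {r | ∃ v, IsFactor u v ∧ FracPow w v ∧ r = (v.length : ℝ) / (w.length : ℝ)}

/-- The index of the factor `w` in `u`: `sup {r ∈ ℚ | w ^ r ∈ L(u)}`. -/
noncomputable def index (u : ℕ → A) (w : List A) : ℝ := sSup (expSet u w)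

/-- A finite word is primitive if it is not a proper integer power. -/
def Primitive (w : List A) : Prop :=
  w ≠ [] ∧ ∀ (z : List A) (k : ℕ), 2 ≤ k → w ≠ (List.replicate k z).flatten

/-- `w` is left special in `u` (alphabet `Bool`, `true = A`, `false = B`). -/
def LeftSpecial (u : ℕ → Bool) (w : List Bool) : Prop :=
  IsFactor u (true :: w) ∧ IsFactor u (false :: w)

/-- `w` is right special in `u`. -/
def RightSpecial (u : ℕ → Bool) (w : List Bool) : Prop :=
  IsFactor u (w ++ [true]) ∧ IsFactor u (w ++ [false])

/-- The Sturmian word of slope `α` and intercept `x₀`, coding the orbit of `x₀`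
under the exchange of the two intervals `I_A = [0, α)` (coded `true`) and
`I_B = [α, 1)` (coded `false`); the exchange is the rotation `x ↦ x + (1 - α) mod 1`. -/
noncomputable def sturmianWord (α x₀ : ℝ) : ℕ → Bool :=
  fun n => decide (Int.fract (x₀ + n * (1 - α)) < α)

/-- The Sturmian morphism `A ↦ AᶜB`, `B ↦ A` applied to a finite word. -/
def phiW (c : ℕ) (w : List Bool) : List Bool :=
  (w.map fun b => if b then List.replicate c true ++ [false] else [true]).flatten

/-- The Sturmian morphism `A ↦ AᶜB`, `B ↦ A` applied to an infinite word. -/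
noncomputable def phiInf (c : ℕ) (u : ℕ → Bool) : ℕ → Bool :=
  fun n => (phiW c ((List.range (n + 1)).map u)).getD n false

end SturmianPaper

namespace SturmianPaper

variable {A : Type*}

/-- `u` agrees on its first `n` letters with the periodic word `w w w ⋯` read from phase `j`. -/
def AgreesWithPowFrom (u : ℕ → A) (w : List A) (j n : ℕ) : Prop :=
  ∀ t < n, w[(j + t) % w.length]? = some (u t)

lemma FactorAt.getElem? {u : ℕ → A} {v : List A} {i : ℕ} (h : FactorAt u v i)
    {t : ℕ} (ht : t < v.length) : v[t]? = some (u (i + t)) := by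
  conv_lhs => rw [h]
  rw [List.getElem?_map, List.getElem?_range ht]
  rfl

lemma factorAt_prefix (u : ℕ → A) (n : ℕ) : FactorAt u ((List.range n).map u) 0 := by
  simp [FactorAt]

lemma exists_fracPow_length_ge_of_not_bddAbove {u : ℕ → A} {w : List A}
    (h : ¬ BddAbove (expSet u w)) (L : ℕ) :
    ∃ v, IsFactor u v ∧ FracPow w v ∧ L ≤ v.length := by
  obtain ⟨r, ⟨v, hv, hfp, rfl⟩, hLr⟩ := not_bddAbove_iff.mp h L
  refine ⟨v, hv, hfp, ?_⟩
  have hw : (1 : ℝ) ≤ w.length := by exact_mod_cast List.length_pos_iff.mpr hfp.1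
  exact_mod_cast hLr.le.trans (div_le_self (by positivity) hw)

/-- The prefix of length `n` occurs in a fractional power of `w` of length at least `B + n`,
within distance `B` of its start; the offset of that occurrence gives the phase. -/
lemma UniformlyRecurrent.exists_agreesWithPowFrom {u : ℕ → A} (hur : UniformlyRecurrent u)
    {w : List A} (hlong : ∀ L : ℕ, ∃ v, IsFactor u v ∧ FracPow w v ∧ L ≤ v.length) (n : ℕ) :
    ∃ j < w.length, AgreesWithPowFrom u w j n := by
  set p := (List.range n).map u
  have hp : FactorAt u p 0 := factorAt_prefix u n
  obtain ⟨B, hB⟩ := hur p ⟨0, hp⟩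
  obtain ⟨v, ⟨i, hvi⟩, hfp, hvlen⟩ := hlong (B + n)
  obtain ⟨i', hii', hi'B, hpi'⟩ := hB i
  have hwpos : 0 < w.length := List.length_pos_iff.mpr hfp.1
  refine ⟨(i' - i) % w.length, Nat.mod_lt _ hwpos, fun t ht => ?_⟩
  have htv : i' - i + t < v.length := by omega
  have hpt : p.length = n := by simp [p]
  have hv_t : w[(i' - i + t) % w.length]? = some (u (i' + t)) := by
    rw [← hfp.2.2 _ htv, hvi.getElem? htv]
    congr 2
    omega
  have hp_t : u (i' + t) = u t := by
    simpa using (hpi'.getElem? (hpt ▸ ht)).symm.trans (hp.getElem? (hpt ▸ ht))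
  rw [Nat.mod_add_mod, hv_t, hp_t]

lemma exists_forall_agreesWithPowFrom {u : ℕ → A} {w : List A}
    (h : ∀ n, ∃ j < w.length, AgreesWithPowFrom u w j n) :
    ∃ j, ∀ n, AgreesWithPowFrom u w j n := by
  by_contra! hbad
  choose f hf using hbad
  obtain ⟨j, hj, hagree⟩ := h ((Finset.range w.length).sup f)
  exact hf j (fun t ht => hagree t
    (ht.trans_le (Finset.le_sup (Finset.mem_range.mpr hj))))

lemma eventuallyPeriodic_of_agreesWithPowFrom {u : ℕ → A} {w : List A} (hw : w ≠ [])
    {j : ℕ} (h : ∀ n, AgreesWithPowFrom u w j n) : EventuallyPeriodic u := by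
  refine ⟨w.length, List.length_pos_iff.mpr hw, 0, fun n _ => ?_⟩
  have hshift := h (n + w.length + 1) (n + w.length) (by omega)
  rw [← Nat.add_assoc, Nat.add_mod_right, h (n + 1) n (by omega)] at hshift
  exact (Option.some.inj hshift).symm

theorem factor_index_finite_general {A : Type*}
    (u : ℕ → A) (hap : ¬ EventuallyPeriodic u) (hur : UniformlyRecurrent u)
    (w : List A) :
    BddAbove (expSet u w) := by
  by_contra hB
  have hlong := exists_fracPow_length_ge_of_not_bddAbove hB
  obtain ⟨_, -, hfp, -⟩ := hlong 0
  obtain ⟨j, hj⟩ := exists_forall_agreesWithPowFrom (hur.exists_agreesWithPowFrom hlong)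
  exact hap (eventuallyPeriodic_of_agreesWithPowFrom hfp.1 hj)

/-- every factor of an aperiodic uniformly recurrent word over a
finite alphabet has finite index, i.e. the set of exponents is bounded above. -/
theorem factor_index_finite {A : Type*} [DecidableEq A] [Fintype A]
    (u : ℕ → A) (hap : ¬ EventuallyPeriodic u) (hur : UniformlyRecurrent u)
    (w : List A) (hw : IsFactor u w) :
    BddAbove (expSet u w) :=
  factor_index_finite_general u hap hur w

end SturmianPaper
end

section
/- Let u be an aperiodic uniformly recurrent infinite word with complexity function C and recurrence function R. Then for every factor w of u, R(|w|) ≥ |w|·ind(w) + C(|w|) − |w|. -/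
open Filter Topology

/-!
Let `n = |w|` and let `v = w ^ (|v| / n)` occur at a position `i` so late that every factor of
length `n` has already occurred before `i`. Consecutive occurrences of a factor of length `n` are
at most `R(n) + 1 - n` apart, so every factor of length `n` occurs at some position of
`[i, i + R(n) - n]`. The factors occurring at the first `|v| - n + 1` of these positions lie
inside `v`, hence are rotations of `w`: at most `n` of them. Counting the remaining positions gives
`C(n) ≤ n + R(n) - |v|`; the case `R(n) < |v|` would force `C(n) ≤ n`, which by Morse–Hedlund
contradicts aperiodicity. Taking the supremum over `v` gives the bound on `ind(w)`.
-/

namespace SturmianPaper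

variable {A : Type*}

def window (u : ℕ → A) (i k : ℕ) : List A := (List.range k).map fun j => u (i + j)

@[simp] lemma length_window (u : ℕ → A) (i k : ℕ) : (window u i k).length = k := by
  simp [window]

lemma factorAt_iff {u : ℕ → A} {w : List A} {i : ℕ} :
    FactorAt u w i ↔ w = window u i w.length := Iff.rfl

lemma factorAt_window (u : ℕ → A) (i k : ℕ) : FactorAt u (window u i k) i := by
  rw [factorAt_iff, length_window]

lemma window_add (u : ℕ → A) (i a b : ℕ) :
    window u i (a + b) = window u i a ++ window u (i + a) b := by
  simp only [window, List.range_add, List.map_append, List.map_map]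
  congr 1
  exact List.map_congr_left fun j _ => by simp [add_assoc]

lemma take_window (u : ℕ → A) (i k t : ℕ) : (window u i k).take t = window u i (min t k) := by
  simp [window, ← List.map_take, List.take_range]

lemma drop_window (u : ℕ → A) (i : ℕ) {k t : ℕ} (h : t ≤ k) :
    (window u i k).drop t = window u (i + t) (k - t) := by
  conv_lhs => rw [← Nat.add_sub_cancel' h, window_add]
  exact List.drop_left' (length_window u i t)

lemma window_eq_window_iff {u : ℕ → A} {i j k : ℕ} :
    window u i k = window u j k ↔ ∀ s < k, u (i + s) = u (j + s) := by
  simp [window, List.map_inj_left]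

lemma prefix_window_iff {u : ℕ → A} {w : List A} {i k : ℕ} :
    w <+: window u i k ↔ w.length ≤ k ∧ FactorAt u w i := by
  constructor
  · intro h
    have hk : w.length ≤ k := by simpa using h.length_le
    refine ⟨hk, ?_⟩
    rw [factorAt_iff, ← min_eq_left hk, ← take_window]
    exact List.prefix_iff_eq_take.mp h
  · rintro ⟨hk, hw⟩
    rw [List.prefix_iff_eq_take, take_window, min_eq_left hk]
    exact hw

lemma factorAt_append {u : ℕ → A} {v w : List A} {i : ℕ} :
    FactorAt u (v ++ w) i ↔ FactorAt u v i ∧ FactorAt u w (i + v.length) := by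
  rw [factorAt_iff, factorAt_iff, factorAt_iff, List.length_append, window_add]
  exact ⟨fun h => List.append_inj h (length_window ..).symm, fun ⟨hv, hw⟩ => by rw [← hv, ← hw]⟩

def factorsOfLength (u : ℕ → A) (n : ℕ) : Set (List A) := {w | IsFactor u w ∧ w.length = n}

lemma complexity_eq_ncard (u : ℕ → A) (n : ℕ) :
    complexity u n = (factorsOfLength u n).ncard := rfl

lemma window_mem_factorsOfLength (u : ℕ → A) (i n : ℕ) : window u i n ∈ factorsOfLength u n :=
  ⟨⟨i, factorAt_window u i n⟩, length_window u i n⟩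

lemma finite_factorsOfLength [Finite A] (u : ℕ → A) (n : ℕ) : (factorsOfLength u n).Finite :=
  (List.finite_length_eq A n).subset fun _ hw => hw.2

lemma image_take_factorsOfLength_succ (u : ℕ → A) (n : ℕ) :
    List.take n '' factorsOfLength u (n + 1) = factorsOfLength u n := by
  ext w
  constructor
  · rintro ⟨_, ⟨⟨i, hi⟩, hlen⟩, rfl⟩
    rw [factorAt_iff.mp hi, take_window, hlen, min_eq_left n.le_succ]
    exact window_mem_factorsOfLength u i n
  · rintro ⟨⟨i, hi⟩, hlen⟩
    refine ⟨window u i (n + 1), window_mem_factorsOfLength u i (n + 1), ?_⟩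
    rw [take_window, min_eq_left n.le_succ, ← hlen]
    exact (factorAt_iff.mp hi).symm

lemma complexity_le_complexity_succ [Finite A] (u : ℕ → A) (n : ℕ) :
    complexity u n ≤ complexity u (n + 1) := by
  rw [complexity_eq_ncard, complexity_eq_ncard, ← image_take_factorsOfLength_succ]
  exact Set.ncard_image_le (finite_factorsOfLength u (n + 1))

lemma complexity_zero (u : ℕ → A) : complexity u 0 = 1 := by
  have : factorsOfLength u 0 = {[]} := by
    ext w
    simp only [factorsOfLength, Set.mem_singleton_iff, List.length_eq_zero_iff]
    exact ⟨And.right, fun h => ⟨⟨0, by simp [h, FactorAt]⟩, h⟩⟩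
  rw [complexity_eq_ncard, this, Set.ncard_singleton]

lemma exists_complexity_succ_le {u : ℕ → A} {n : ℕ} (h : complexity u n ≤ n) :
    ∃ m, complexity u (m + 1) ≤ complexity u m := by
  by_contra! hlt
  have : ∀ k, k + 1 ≤ complexity u k := by
    intro k
    induction k with
    | zero => rw [complexity_zero]
    | succ k ih => exact (Nat.succ_le_succ ih).trans (hlt k)
  exact absurd (this n) (by omega)

lemma eq_of_window_eq_of_complexity_succ_le [Finite A] {u : ℕ → A} {m i j : ℕ}
    (hm : complexity u (m + 1) ≤ complexity u m) (h : window u i m = window u j m) :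
    u (i + m) = u (j + m) := by
  have hinj : Set.InjOn (List.take m) (factorsOfLength u (m + 1)) := by
    refine Set.injOn_of_ncard_image_eq ?_ (finite_factorsOfLength u (m + 1))
    rw [image_take_factorsOfLength_succ]
    exact le_antisymm (complexity_le_complexity_succ u m) hm
  have hext := hinj (window_mem_factorsOfLength u i (m + 1))
    (window_mem_factorsOfLength u j (m + 1))
    (by rwa [take_window, take_window, min_eq_left m.le_succ])
  exact window_eq_window_iff.mp hext m m.lt_succ_self

lemma eventuallyPeriodic_of_window_eq {u : ℕ → A} {m a b : ℕ}
    (hext : ∀ i j, window u i m = window u j m → u (i + m) = u (j + m))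
    (hab : a < b) (h : window u a m = window u b m) : EventuallyPeriodic u := by
  have hshift : ∀ k, u (a + k) = u (b + k) := by
    intro k
    induction k using Nat.strong_induction_on with
    | _ k ih =>
      rcases lt_or_ge k m with hk | hk
      · exact window_eq_window_iff.mp h k hk
      · have hw : window u (a + (k - m)) m = window u (b + (k - m)) m :=
          window_eq_window_iff.mpr fun s hs => by
            simpa only [add_assoc] using ih (k - m + s) (by omega)
        simpa only [add_assoc, Nat.sub_add_cancel hk] using hext _ _ hw
  refine ⟨b - a, by omega, a, fun k hk => ?_⟩
  obtain ⟨k, rfl⟩ := Nat.exists_eq_add_of_le hk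
  rw [show a + k + (b - a) = b + k by omega]
  exact (hshift k).symm

/-- The hard direction of the Morse–Hedlund theorem. -/
theorem lt_complexity_of_not_eventuallyPeriodic [Finite A] {u : ℕ → A}
    (hap : ¬ EventuallyPeriodic u) (n : ℕ) : n < complexity u n := by
  by_contra! h
  obtain ⟨m, hm⟩ := exists_complexity_succ_le h
  obtain ⟨a, b, hab, hwin⟩ := (finite_factorsOfLength u m).exists_lt_map_eq_of_forall_mem
    (f := (window u · m)) (window_mem_factorsOfLength u · m)
  exact hap (eventuallyPeriodic_of_window_eq
    (fun _ _ => eq_of_window_eq_of_complexity_succ_le hm) hab hwin)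

lemma UniformlyRecurrent.exists_bound_factorsOfLength [Finite A] {u : ℕ → A}
    (hur : UniformlyRecurrent u) (n : ℕ) :
    ∃ B, ∀ w ∈ factorsOfLength u n, ∀ k, ∃ i, k ≤ i ∧ i < k + B ∧ FactorAt u w i := by
  choose! g hg using hur
  obtain ⟨B, hB⟩ := ((finite_factorsOfLength u n).image g).bddAbove
  refine ⟨B, fun w hw k => ?_⟩
  obtain ⟨i, hki, hi, hwi⟩ := hg w hw.1 k
  exact ⟨i, hki, hi.trans_le (Nat.add_le_add_left (hB ⟨w, hw, rfl⟩) k), hwi⟩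

lemma UniformlyRecurrent.exists_consecutive_factorAt {u : ℕ → A}
    (hur : UniformlyRecurrent u) {w : List A} {p₀ i : ℕ} (hp₀ : FactorAt u w p₀) (hi : p₀ < i) :
    ∃ p q, p < i ∧ i ≤ q ∧ FactorAt u w p ∧ FactorAt u w q ∧
      ∀ r, p < r → r < q → ¬ FactorAt u w r := by
  classical
  set p := Nat.findGreatest (FactorAt u w) (i - 1)
  have hp : FactorAt u w p := Nat.findGreatest_spec (by omega) hp₀
  have hpi : p < i := (Nat.findGreatest_le (i - 1)).trans_lt (by omega)
  obtain ⟨B, hB⟩ := hur w ⟨p₀, hp₀⟩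
  have hnext : ∃ q, p < q ∧ FactorAt u w q :=
    let ⟨q, hq, _, hwq⟩ := hB (p + 1)
    ⟨q, by omega, hwq⟩
  refine ⟨p, Nat.find hnext, hpi, ?_, hp, (Nat.find_spec hnext).2,
    fun r hpr hrq hr => Nat.find_min hnext hrq ⟨hpr, hr⟩⟩
  by_contra! hqi
  exact Nat.findGreatest_is_greatest (Nat.find_spec hnext).1 (by omega) (Nat.find_spec hnext).2

lemma FracPow.refl {w : List A} (hw : w ≠ []) : FracPow w w :=
  ⟨hw, le_rfl, fun _ hi => by rw [Nat.mod_eq_of_lt hi]⟩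

lemma FracPow.take_drop_eq_rotate {w v : List A} (h : FracPow w v) {t : ℕ}
    (ht : t + w.length ≤ v.length) : (v.drop t).take w.length = w.rotate t := by
  apply List.ext_getElem?
  intro s
  rcases lt_or_ge s w.length with hs | hs
  · rw [List.getElem?_take_of_lt hs, List.getElem?_drop, h.2.2 _ (by omega),
      List.getElem?_rotate hs, add_comm]
  · rw [List.getElem?_eq_none (by rw [List.length_take, List.length_drop]; omega),
      List.getElem?_eq_none (by simpa using hs)]

section ReturnWords

variable [DecidableEq A]

instance (u : ℕ → A) (w : List A) (i : ℕ) : Decidable (FactorAt u w i) :=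
  inferInstanceAs (Decidable (w = _))

lemma occCount_window (u : ℕ → A) (w : List A) (i L : ℕ) :
    occCount (window u i L) w =
      ((Finset.range (L + 1)).filter fun t => t + w.length ≤ L ∧ FactorAt u w (i + t)).card := by
  rw [occCount, length_window, Finset.card_def, Finset.filter_val, Finset.range_val,
    Multiset.range, Multiset.filter_coe, Multiset.coe_card]
  refine congrArg List.length (List.filter_congr fun t ht => ?_)
  have htL : t ≤ L := Nat.lt_succ_iff.mp (List.mem_range.mp ht)
  rw [drop_window u i htL, decide_eq_decide, prefix_window_iff]
  exact and_congr_left' (by omega)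

lemma occCount_window_eq_two_iff {u : ℕ → A} {w : List A} {p c : ℕ} (hc : 0 < c)
    (hp : FactorAt u w p) (hpc : FactorAt u w (p + c)) :
    occCount (window u p (c + w.length)) w = 2 ↔ ∀ r, p < r → r < p + c → ¬ FactorAt u w r := by
  rw [occCount_window]
  set S := (Finset.range (c + w.length + 1)).filter
    fun t => t + w.length ≤ c + w.length ∧ FactorAt u w (p + t)
  have hS : ∀ t, t ∈ S ↔ t ≤ c ∧ FactorAt u w (p + t) := fun t => by
    simp only [S, Finset.mem_filter, Finset.mem_range]
    exact ⟨fun h => ⟨by omega, h.2.2⟩, fun h => ⟨by omega, by omega, h.2⟩⟩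
  have hsub : {0, c} ⊆ S := Finset.insert_subset_iff.mpr
    ⟨(hS 0).2 ⟨c.zero_le, hp⟩, Finset.singleton_subset_iff.mpr ((hS c).2 ⟨le_rfl, hpc⟩)⟩
  rw [← Finset.card_pair hc.ne]
  constructor
  · intro hcard r hpr hrc hr
    have hr' : r - p ∈ S := (hS _).2 ⟨by omega, by rwa [Nat.add_sub_cancel' hpr.le]⟩
    rw [← Finset.eq_of_subset_of_card_le hsub hcard.le] at hr'
    simp only [Finset.mem_insert, Finset.mem_singleton] at hr'
    omega
  · intro hgap
    refine congrArg Finset.card (Finset.Subset.antisymm (fun t ht => ?_) hsub)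
    obtain ⟨htc, hpt⟩ := (hS t).1 ht
    by_contra hne
    simp only [Finset.mem_insert, Finset.mem_singleton, not_or] at hne
    exact hgap (p + t) (by omega) (by omega) hpt

lemma isReturnWord_window {u : ℕ → A} {w : List A} {p q : ℕ} (hpq : p < q)
    (hp : FactorAt u w p) (hq : FactorAt u w q) (hgap : ∀ r, p < r → r < q → ¬ FactorAt u w r) :
    IsReturnWord u w (window u p (q - p)) := by
  have hqp : p + (q - p) = q := Nat.add_sub_cancel' hpq.le
  have happ : window u p (q - p) ++ w = window u p (q - p + w.length) := by
    rw [window_add, hqp, ← factorAt_iff.mp hq]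
  refine ⟨List.ne_nil_of_length_pos (by rw [length_window]; omega), ⟨p, ?_⟩, ?_, ?_⟩
  · rw [factorAt_append, length_window, hqp]
    exact ⟨factorAt_window u p (q - p), hq⟩
  · rw [happ, prefix_window_iff]
    exact ⟨by omega, hp⟩
  · rw [happ, occCount_window_eq_two_iff (by omega) hp (by rwa [hqp]), hqp]
    exact hgap

lemma IsReturnWord.not_factorAt {u : ℕ → A} {w v : List A} {j r : ℕ} (hv : IsReturnWord u w v)
    (hj : FactorAt u (v ++ w) j) (hjr : j < r) (hr : r < j + v.length) : ¬ FactorAt u w r := by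
  obtain ⟨hne, -, hpre, hocc⟩ := hv
  have hvw : v ++ w = window u j (v.length + w.length) := by
    rw [← List.length_append]
    exact factorAt_iff.mp hj
  rw [hvw, prefix_window_iff] at hpre
  rw [hvw, occCount_window_eq_two_iff (List.length_pos_of_ne_nil hne) hpre.2
    (factorAt_append.mp hj).2] at hocc
  exact hocc r hjr hr

lemma bddAbove_completeReturnLengths [Finite A] {u : ℕ → A} (hur : UniformlyRecurrent u)
    (n : ℕ) : BddAbove {m | ∃ w v, IsFactor u w ∧ w.length = n ∧ IsReturnWord u w v ∧
      m + 1 = v.length + w.length} := by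
  obtain ⟨B, hB⟩ := hur.exists_bound_factorsOfLength n
  refine ⟨B + n, ?_⟩
  rintro m ⟨w, v, hw, rfl, hv, hm⟩
  obtain ⟨j, hj⟩ := hv.2.1
  obtain ⟨r, hjr, hrB, hr⟩ := hB w ⟨hw, rfl⟩ (j + 1)
  have hvB : v.length ≤ B := by
    by_contra! hBv
    exact hv.not_factorAt hj (by omega) (by omega) hr
  omega

lemma sub_add_length_le_recFun [Finite A] {u : ℕ → A} (hur : UniformlyRecurrent u)
    {w : List A} {p q : ℕ} (hpq : p < q) (hp : FactorAt u w p) (hq : FactorAt u w q)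
    (hgap : ∀ r, p < r → r < q → ¬ FactorAt u w r) :
    q - p + w.length ≤ recFun u w.length + 1 := by
  have hmem : q - p + w.length - 1 ∈ {m | ∃ w' v, IsFactor u w' ∧ w'.length = w.length ∧
      IsReturnWord u w' v ∧ m + 1 = v.length + w'.length} :=
    ⟨w, window u p (q - p), ⟨p, hp⟩, rfl, isReturnWord_window hpq hp hq hgap,
      by rw [length_window]; omega⟩
  have := le_csSup (bddAbove_completeReturnLengths hur w.length) hmem
  rw [recFun]
  omega

lemma exists_factorAt_le_add_recFun [Finite A] {u : ℕ → A} (hur : UniformlyRecurrent u)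
    {w : List A} {p₀ i : ℕ} (hp₀ : FactorAt u w p₀) (hi : p₀ < i) :
    ∃ q, i ≤ q ∧ q + w.length ≤ i + recFun u w.length ∧ FactorAt u w q := by
  obtain ⟨p, q, hpi, hiq, hp, hq, hgap⟩ := hur.exists_consecutive_factorAt hp₀ hi
  have := sub_add_length_le_recFun hur (hpi.trans_le hiq) hp hq hgap
  exact ⟨q, hiq, by omega, hq⟩

theorem length_add_complexity_le [Finite A] {u : ℕ → A} (hap : ¬ EventuallyPeriodic u)
    (hur : UniformlyRecurrent u) {w v : List A} (hv : IsFactor u v) (hwv : FracPow w v) :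
    v.length + complexity u w.length ≤ recFun u w.length + w.length := by
  set n := w.length
  set R := recFun u n
  set L := v.length
  have hnL : n ≤ L := hwv.2.1
  obtain ⟨B, hB⟩ := hur.exists_bound_factorsOfLength n
  obtain ⟨i, hBi, -, hvi⟩ := (hur v hv).choose_spec B
  have hcover : factorsOfLength u n ⊆ ↑((Finset.range n).image w.rotate ∪
      (Finset.Ioc (L - n) (R - n)).image fun t => window u (i + t) n) := by
    intro f hf
    obtain ⟨p₀, -, hp₀, hfp₀⟩ := hB f hf 0
    obtain ⟨q, hiq, hqR, hfq⟩ := exists_factorAt_le_add_recFun (i := i) hur hfp₀ (by omega)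
    rw [hf.2] at hqR
    have hfwin : f = window u (i + (q - i)) n := by
      rw [Nat.add_sub_cancel' hiq, ← hf.2]
      exact factorAt_iff.mp hfq
    simp only [Finset.coe_union, Finset.coe_image, Set.mem_union, Set.mem_image,
      Finset.mem_coe, Finset.mem_range, Finset.mem_Ioc]
    rcases le_or_gt (q - i) (L - n) with hqL | hqL
    · refine Or.inl ⟨(q - i) % n, Nat.mod_lt _ (List.length_pos_of_ne_nil hwv.1), ?_⟩
      rw [List.rotate_mod, ← hwv.take_drop_eq_rotate (by omega), factorAt_iff.mp hvi,
        drop_window u i (by omega), take_window, min_eq_left (by omega), hfwin]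
    · exact Or.inr ⟨q - i, ⟨hqL, by omega⟩, hfwin.symm⟩
  have hcard : complexity u n ≤ n + (R - n - (L - n)) := by
    rw [complexity_eq_ncard]
    refine (Set.ncard_le_ncard hcover).trans ?_
    rw [Set.ncard_coe_finset]
    refine (Finset.card_union_le _ _).trans (add_le_add ?_ ?_)
    · exact Finset.card_image_le.trans (Finset.card_range n).le
    · exact Finset.card_image_le.trans (Nat.card_Ioc _ _).le
  have := lt_complexity_of_not_eventuallyPeriodic hap n
  omega

end ReturnWords

theorem recFun_ge_index_general {A : Type*} [DecidableEq A] [Fintype A]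
    (u : ℕ → A) (hap : ¬ EventuallyPeriodic u) (hur : UniformlyRecurrent u)
    (w : List A) (hne : w ≠ []) :
    (recFun u w.length : ℝ) ≥
      (w.length : ℝ) * index u w + (complexity u w.length : ℝ) - (w.length : ℝ) := by
  set n := w.length
  have hn₀ : 0 < n := List.length_pos_of_ne_nil hne
  have hn : (0 : ℝ) < n := by exact_mod_cast hn₀
  have hC : complexity u n ≤ recFun u n := by
    have := length_add_complexity_le hap hur (window_mem_factorsOfLength u 0 n).1
      (FracPow.refl (List.ne_nil_of_length_pos ((length_window u 0 n).symm ▸ hn₀)))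
    rw [length_window] at this
    omega
  -- `index u w` is `sSup ∅ = 0` when no power of `w` occurs, so the bound must be nonnegative.
  have hidx : index u w ≤ (recFun u n + n - complexity u n) / n := by
    refine Real.sSup_le ?_ (div_nonneg ?_ hn.le)
    · rintro _ ⟨v, hv, hwv, rfl⟩
      have : (v.length + complexity u n : ℝ) ≤ recFun u n + n := by
        exact_mod_cast length_add_complexity_le hap hur hv hwv
      exact div_le_div_of_nonneg_right (by linarith) hn.le
    · have : (complexity u n : ℝ) ≤ recFun u n := by exact_mod_cast hC
      linarith
  rw [le_div_iff₀ hn] at hidx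
  linarith

/-- lower bound `R(|w|) ≥ |w|·ind(w) + C(|w|) − |w|` on the
recurrence function of an aperiodic uniformly recurrent word. -/
theorem recFun_ge_index {A : Type*} [DecidableEq A] [Fintype A]
    (u : ℕ → A) (hap : ¬ EventuallyPeriodic u) (hur : UniformlyRecurrent u)
    (w : List A) (hw : IsFactor u w) (hne : w ≠ []) :
    (recFun u w.length : ℝ) ≥
      (w.length : ℝ) * index u w + (complexity u w.length : ℝ) - (w.length : ℝ) :=
  recFun_ge_index_general u hap hur w hne

end SturmianPaper
end

section
/- Let u be a Sturmian word with slope α = [0,1,a₂,a₃,…] and convergent denominators q_N. Then for every N ≥ 1 there exists a factor w of u with |w| = q_N and ind(w) ≥ 2 + a_{N+1} + (q_{N−1} − 2)/q_N. -/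
/-!
The Sturmian word codes the orbit of `x₀` under the rotation `x ↦ x - α`. Shifting by `q_N`
moves every point by `θ_N = q_N α - p_N`, so the word and its shift by `q_N` disagree exactly
when the orbit passes through an arc of length `‖q_N α‖` next to `0` or `α`. By the best
approximation property of the convergents, two such passages can be `q_{N+1} + q_N` steps apart
(the longest gap of the three-gap theorem); the `q_{N+1} + q_N - 2` agreeing positions in
between give a factor of length `q_N` repeated with exponent
`(2 q_N + q_{N+1} - 2) / q_N = 2 + a_{N+1} + (q_{N-1} - 2) / q_N`. Walking along multiples of an
even-indexed `q_k` shows that passages occur with bounded gaps, so these exponents are bounded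
and the index is a genuine supremum.
-/

open Filter Topology

namespace SturmianPaper

variable {A : Type*} [DecidableEq A]

def cfDen (a : ℕ → ℕ) : ℕ → ℕ
  | 0 => 1
  | 1 => 1
  | n + 2 => a (n + 2) * cfDen a (n + 1) + cfDen a n

def cfNum (a : ℕ → ℕ) : ℕ → ℕ
  | 0 => 0
  | 1 => 1
  | n + 2 => a (n + 2) * cfNum a (n + 1) + cfNum a n

noncomputable def cfErr (α : ℝ) (a : ℕ → ℕ) (m : ℕ) : ℝ := cfDen a m * α - cfNum a m

lemma ne_zero_and_mul_nonpos_of_lt {q q' k x y : ℤ} (hq : 0 < q) (hk : 0 < k) (hk' : k < q')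
    (h : k = x * q + y * q') : x ≠ 0 ∧ x * y ≤ 0 := by
  constructor
  · rintro rfl
    rcases le_or_gt y 0 with hy | hy <;> nlinarith
  · by_contra! hxy
    rcases pos_and_pos_or_neg_and_neg_of_mul_pos hxy with ⟨hx, hy⟩ | ⟨hx, hy⟩ <;> nlinarith

lemma abs_le_abs_add_of_mul_nonneg {R : Type*} [CommRing R] [LinearOrder R] [IsStrictOrderedRing R]
    {x y : R} (h : 0 ≤ x * y) : |x| ≤ |x + y| :=
  sq_le_sq.1 (by nlinarith [sq_nonneg y])

section ContinuedFraction

variable {α : ℝ} {a : ℕ → ℕ}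

lemma eq_of_two_step_rec {f g : ℕ → ℕ} (h0 : f 0 = g 0) (h1 : f 1 = g 1)
    (hf : ∀ n, f (n + 2) = a (n + 2) * f (n + 1) + f n)
    (hg : ∀ n, g (n + 2) = a (n + 2) * g (n + 1) + g n) : f = g := by
  funext n
  induction n using Nat.twoStepInduction with
  | zero => exact h0
  | one => exact h1
  | more n ih ih' => rw [hf, hg, ih, ih']

lemma cfDen_pos (a : ℕ → ℕ) (m : ℕ) : 0 < cfDen a m := by
  induction m using Nat.twoStepInduction with
  | zero | one => simp [cfDen]
  | more n ih _ => simp only [cfDen]; omega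

lemma cfNum_mul_cfDen_sub (a : ℕ → ℕ) (m : ℕ) :
    (cfNum a (m + 1) * cfDen a m - cfNum a m * cfDen a (m + 1) : ℤ) = (-1) ^ m := by
  induction m with
  | zero => simp [cfNum, cfDen]
  | succ m ih =>
    simp only [cfNum, cfDen, pow_succ]
    push_cast
    linear_combination (-1 : ℤ) * ih

lemma cfErr_add_two (α : ℝ) (a : ℕ → ℕ) (m : ℕ) :
    cfErr α a (m + 2) = a (m + 2) * cfErr α a (m + 1) + cfErr α a m := by
  simp only [cfErr, cfDen, cfNum]
  push_cast
  ring

lemma two_add_div_cfDen_eq (a : ℕ → ℕ) (n : ℕ) :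
    2 + (a (n + 2) : ℝ) + ((cfDen a n : ℝ) - 2) / cfDen a (n + 1) =
      ((cfDen a (n + 1) + (cfDen a (n + 2) + cfDen a (n + 1) - 2) : ℕ) : ℝ) /
        cfDen a (n + 1) := by
  have hn := cfDen_pos a n
  have hn' := cfDen_pos a (n + 1)
  have hlen : cfDen a (n + 1) + (cfDen a (n + 2) + cfDen a (n + 1) - 2) + 2 =
      2 * cfDen a (n + 1) + a (n + 2) * cfDen a (n + 1) + cfDen a n := by
    simp only [cfDen]; omega
  have hlenR : ((cfDen a (n + 1) + (cfDen a (n + 2) + cfDen a (n + 1) - 2) : ℕ) : ℝ) =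
      2 * cfDen a (n + 1) + a (n + 2) * cfDen a (n + 1) + cfDen a n - 2 := by
    rw [eq_sub_iff_add_eq]; exact_mod_cast hlen
  rw [hlenR]
  field_simp
  ring

/-- The even convergents increase and the odd ones decrease. -/
lemma neg_one_pow_mul_cfNum_div_cfDen_le (a : ℕ → ℕ) (m : ℕ) :
    (-1) ^ m * (cfNum a m / cfDen a m : ℝ) ≤
      (-1) ^ m * (cfNum a (m + 2) / cfDen a (m + 2) : ℝ) := by
  have hdet : (cfNum a (m + 2) * cfDen a m - cfDen a (m + 2) * cfNum a m : ℝ) =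
      (-1) ^ m * a (m + 2) := by
    have h : (cfNum a (m + 1) * cfDen a m - cfNum a m * cfDen a (m + 1) : ℝ) = (-1) ^ m := by
      exact_mod_cast cfNum_mul_cfDen_sub a m
    simp only [cfNum, cfDen]
    push_cast
    linear_combination (a (m + 2) : ℝ) * h
  have h0 : (0 : ℝ) < cfDen a m := by exact_mod_cast cfDen_pos a m
  have h2 : (0 : ℝ) < cfDen a (m + 2) := by exact_mod_cast cfDen_pos a (m + 2)
  rw [← sub_nonneg, ← mul_sub, div_sub_div _ _ h2.ne' h0.ne', hdet, ← mul_div_assoc,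
    ← mul_assoc, ← pow_add, Even.neg_one_pow ⟨m, rfl⟩, one_mul]
  positivity

lemma neg_one_pow_mul_cfErr_pos (hirr : Irrational α)
    (hcf : Tendsto (fun N => (cfNum a N : ℝ) / cfDen a N) atTop (𝓝 α)) (m : ℕ) :
    0 < (-1) ^ m * cfErr α a m := by
  have hmono : Monotone fun k => (-1) ^ m * (cfNum a (m + 2 * k) / cfDen a (m + 2 * k) : ℝ) := by
    refine monotone_nat_of_le_succ fun k => ?_
    have h := neg_one_pow_mul_cfNum_div_cfDen_le a (m + 2 * k)
    rwa [pow_add, pow_mul, neg_one_sq, one_pow, mul_one] at h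
  have htend : Tendsto (fun k => (-1) ^ m * (cfNum a (m + 2 * k) / cfDen a (m + 2 * k) : ℝ))
      atTop (𝓝 ((-1) ^ m * α)) :=
    (hcf.comp (tendsto_atTop_mono (fun k => show k ≤ m + 2 * k by omega) tendsto_id)).const_mul _
  have hle : (-1) ^ m * (cfNum a m / cfDen a m : ℝ) ≤ (-1) ^ m * α := by
    simpa using hmono.ge_of_tendsto htend 0
  have hq : (0 : ℝ) < cfDen a m := by exact_mod_cast cfDen_pos a m
  have hne : cfErr α a m ≠ 0 :=
    ((hirr.natCast_mul (cfDen_pos a m).ne').sub_natCast (cfNum a m)).ne_zero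
  have hnonneg : 0 ≤ (-1) ^ m * cfErr α a m := by
    have : (-1) ^ m * cfErr α a m =
        cfDen a m * ((-1) ^ m * α - (-1) ^ m * (cfNum a m / cfDen a m : ℝ)) := by
      rw [cfErr]; field_simp
    rw [this]
    exact mul_nonneg hq.le (sub_nonneg.2 hle)
  exact hnonneg.lt_of_ne (mul_ne_zero (pow_ne_zero _ (by norm_num)) hne).symm

lemma abs_cfErr (hirr : Irrational α)
    (hcf : Tendsto (fun N => (cfNum a N : ℝ) / cfDen a N) atTop (𝓝 α)) (m : ℕ) :
    |cfErr α a m| = (-1) ^ m * cfErr α a m := by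
  rw [← abs_of_pos (neg_one_pow_mul_cfErr_pos hirr hcf m), abs_mul, abs_neg_one_pow, one_mul]

lemma abs_cfErr_eq_add (hirr : Irrational α)
    (hcf : Tendsto (fun N => (cfNum a N : ℝ) / cfDen a N) atTop (𝓝 α)) (m : ℕ) :
    |cfErr α a m| = a (m + 2) * |cfErr α a (m + 1)| + |cfErr α a (m + 2)| := by
  rw [abs_cfErr hirr hcf, abs_cfErr hirr hcf, abs_cfErr hirr hcf, cfErr_add_two, pow_succ,
    pow_succ]
  ring

lemma abs_cfErr_add_le (hirr : Irrational α)
    (hcf : Tendsto (fun N => (cfNum a N : ℝ) / cfDen a N) atTop (𝓝 α))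
    (ha : ∀ n, 1 ≤ a (n + 2)) (m : ℕ) :
    |cfErr α a (m + 1)| + |cfErr α a (m + 2)| ≤ |cfErr α a m| := by
  have h : (1 : ℝ) ≤ a (m + 2) := by exact_mod_cast ha m
  rw [abs_cfErr_eq_add hirr hcf m]
  nlinarith [abs_nonneg (cfErr α a (m + 1))]

lemma antitone_abs_cfErr (hirr : Irrational α)
    (hcf : Tendsto (fun N => (cfNum a N : ℝ) / cfDen a N) atTop (𝓝 α))
    (ha : ∀ n, 1 ≤ a (n + 2)) : Antitone fun m => |cfErr α a m| :=
  antitone_nat_of_succ_le fun m => by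
    linarith [abs_cfErr_add_le hirr hcf ha m, abs_nonneg (cfErr α a (m + 2))]

lemma abs_cfErr_zero (hirr : Irrational α)
    (hcf : Tendsto (fun N => (cfNum a N : ℝ) / cfDen a N) atTop (𝓝 α)) :
    |cfErr α a 0| = α := by
  rw [abs_cfErr hirr hcf]; simp [cfErr, cfDen, cfNum]

lemma abs_cfErr_one (hirr : Irrational α)
    (hcf : Tendsto (fun N => (cfNum a N : ℝ) / cfDen a N) atTop (𝓝 α)) :
    |cfErr α a 1| = 1 - α := by
  rw [abs_cfErr hirr hcf]; simp [cfErr, cfDen, cfNum]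

lemma abs_cfErr_le (hirr : Irrational α)
    (hcf : Tendsto (fun N => (cfNum a N : ℝ) / cfDen a N) atTop (𝓝 α))
    (ha : ∀ n, 1 ≤ a (n + 2)) (m : ℕ) : |cfErr α a m| ≤ α :=
  (antitone_abs_cfErr hirr hcf ha (Nat.zero_le m)).trans (abs_cfErr_zero hirr hcf).le

lemma abs_cfErr_succ_le (hirr : Irrational α)
    (hcf : Tendsto (fun N => (cfNum a N : ℝ) / cfDen a N) atTop (𝓝 α))
    (ha : ∀ n, 1 ≤ a (n + 2)) (m : ℕ) : |cfErr α a (m + 1)| ≤ 1 - α :=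
  (antitone_abs_cfErr hirr hcf ha (Nat.le_add_left 1 m)).trans (abs_cfErr_one hirr hcf).le

lemma abs_cfErr_lt_one (hirr : Irrational α)
    (hcf : Tendsto (fun N => (cfNum a N : ℝ) / cfDen a N) atTop (𝓝 α))
    (ha : ∀ n, 1 ≤ a (n + 2)) (m : ℕ) : |cfErr α a m| < 1 := by
  have h := neg_one_pow_mul_cfErr_pos hirr hcf 1
  rw [← abs_cfErr hirr hcf, abs_cfErr_one hirr hcf] at h
  linarith [abs_cfErr_le hirr hcf ha m]

lemma cfErr_mul_cfErr_succ_neg (hirr : Irrational α)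
    (hcf : Tendsto (fun N => (cfNum a N : ℝ) / cfDen a N) atTop (𝓝 α)) (m : ℕ) :
    cfErr α a m * cfErr α a (m + 1) < 0 := by
  have h := mul_pos (neg_one_pow_mul_cfErr_pos hirr hcf m)
    (neg_one_pow_mul_cfErr_pos hirr hcf (m + 1))
  have hsq : ((-1 : ℝ) ^ m) ^ 2 = 1 := by rw [← pow_mul, pow_mul', neg_one_sq, one_pow]
  have hprod : (-1) ^ m * cfErr α a m * ((-1) ^ (m + 1) * cfErr α a (m + 1)) =
      -(cfErr α a m * cfErr α a (m + 1)) := by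
    rw [pow_succ]; linear_combination (-(cfErr α a m * cfErr α a (m + 1))) * hsq
  linarith

lemma exists_eq_cfDen_comb_and_eq_cfNum_comb (a : ℕ → ℕ) (m : ℕ) (k z : ℤ) :
    ∃ x y : ℤ, k = x * cfDen a m + y * cfDen a (m + 1) ∧
      z = x * cfNum a m + y * cfNum a (m + 1) := by
  have hdet := cfNum_mul_cfDen_sub a m
  have hsq : ((-1 : ℤ) ^ m) ^ 2 = 1 := by rw [← pow_mul, pow_mul', neg_one_sq, one_pow]
  refine ⟨(-1) ^ m * (k * cfNum a (m + 1) - z * cfDen a (m + 1)),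
    (-1) ^ m * (z * cfDen a m - k * cfNum a m), ?_, ?_⟩
  · linear_combination (-k) * hsq - (-1) ^ m * k * hdet
  · linear_combination (-z) * hsq - (-1) ^ m * z * hdet

lemma abs_cfErr_le_abs_mul_sub (hirr : Irrational α)
    (hcf : Tendsto (fun N => (cfNum a N : ℝ) / cfDen a N) atTop (𝓝 α))
    (m : ℕ) {k : ℕ} (z : ℤ) (hk : 0 < k) (hk' : k < cfDen a (m + 1)) :
    |cfErr α a m| ≤ |k * α - z| := by
  obtain ⟨x, y, hkxy, hzxy⟩ := exists_eq_cfDen_comb_and_eq_cfNum_comb a m k z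
  obtain ⟨hx, hxy⟩ := ne_zero_and_mul_nonpos_of_lt (by exact_mod_cast cfDen_pos a m)
    (by exact_mod_cast hk) (by exact_mod_cast hk') hkxy
  have hkR : (k : ℝ) = x * cfDen a m + y * cfDen a (m + 1) := by exact_mod_cast hkxy
  have hzR : (z : ℝ) = x * cfNum a m + y * cfNum a (m + 1) := by exact_mod_cast hzxy
  have hsplit : (k : ℝ) * α - z = x * cfErr α a m + y * cfErr α a (m + 1) := by
    simp only [cfErr]; linear_combination α * hkR - hzR
  have hxR : (1 : ℝ) ≤ |(x : ℝ)| := by exact_mod_cast Int.one_le_abs hx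
  have hxyR : (x : ℝ) * y ≤ 0 := by exact_mod_cast hxy
  have hsame : 0 ≤ x * cfErr α a m * (y * cfErr α a (m + 1)) := by
    nlinarith [cfErr_mul_cfErr_succ_neg hirr hcf m]
  calc |cfErr α a m| ≤ |(x : ℝ)| * |cfErr α a m| := le_mul_of_one_le_left (abs_nonneg _) hxR
    _ = |x * cfErr α a m| := (abs_mul _ _).symm
    _ ≤ |k * α - z| := hsplit ▸ abs_le_abs_add_of_mul_nonneg hsame

end ContinuedFraction

section Rotation

lemma exists_nat_le_one_div_and_fract_sub_lt {s : ℝ} (hs : 0 < s) (t : ℝ) :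
    ∃ j : ℕ, (j : ℝ) ≤ 1 / s ∧ Int.fract (t - j * s) < s := by
  set j := ⌊Int.fract t / s⌋₊
  have hj : (j : ℝ) ≤ Int.fract t / s := Nat.floor_le (div_nonneg (Int.fract_nonneg t) hs.le)
  have h0 : 0 ≤ (j : ℝ) * s := by positivity
  have h1 : (j : ℝ) * s ≤ Int.fract t := (le_div_iff₀ hs).1 hj
  have h2 : Int.fract t < (j + 1) * s := (div_lt_iff₀ hs).1 (Nat.lt_floor_add_one _)
  have hfr : Int.fract (t - j * s) = Int.fract t - j * s :=
    Int.fract_eq_iff.2 ⟨by linarith, by linarith [Int.fract_lt_one t], ⌊t⌋,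
      by rw [← Int.self_sub_fract]; ring⟩
  refine ⟨j, hj.trans ?_, by rw [hfr]; linarith⟩
  exact div_le_div_of_nonneg_right (Int.fract_lt_one t).le hs.le

lemma fract_sub_of_lt {x c : ℝ} (hxc : x < c) (hcx : c ≤ x + 1) :
    Int.fract (x - c) = x - c + 1 := by
  rw [← Int.fract_add_one]
  exact Int.fract_eq_self.2 ⟨by linarith, by linarith⟩

/-- Shifting a point by `B` changes its coding by `[0, α)` exactly when a boundary point
`0` or `α` of the coding interval lies in `(X - B, X]` modulo `1`. -/
lemma decide_fract_sub_lt_ne_iff {α B : ℝ} (X : ℝ) (hB : 0 < B) (hBα : B ≤ α)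
    (hB1 : B ≤ 1 - α) :
    decide (Int.fract (X - B) < α) ≠ decide (Int.fract X < α) ↔
      Int.fract X < B ∨ Int.fract (X - α) < B := by
  have hred : ∀ c, Int.fract (X - c) = Int.fract (Int.fract X - c) := fun c =>
    Int.fract_eq_fract.2 ⟨⌊X⌋, by rw [← Int.self_sub_fract]; ring⟩
  rw [hred B, hred α]
  have hx0 := Int.fract_nonneg X
  have hx1 := Int.fract_lt_one X
  set x := Int.fract X
  rcases lt_or_ge x B with h1 | h1
  · rw [fract_sub_of_lt h1 (by linarith), fract_sub_of_lt (by linarith) (by linarith)]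
    simp [h1, show x < α by linarith, show ¬x - B + 1 < α by linarith]
  rcases lt_or_ge x α with h2 | h2
  · rw [Int.fract_eq_self.2 ⟨by linarith, by linarith⟩, fract_sub_of_lt h2 (by linarith)]
    simp [h2, show x - B < α by linarith, show ¬x < B by linarith,
      show ¬x - α + 1 < B by linarith]
  rw [Int.fract_eq_self.2 ⟨by linarith, by linarith⟩,
    Int.fract_eq_self.2 ⟨by linarith, by linarith⟩]
  rcases lt_or_ge x (α + B) with h3 | h3
  · simp [show x - B < α by linarith, show ¬x < α by linarith, show x - α < B by linarith]
  · simp [show ¬x - B < α by linarith, show ¬x < α by linarith, show ¬x < B by linarith,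
      show ¬x - α < B by linarith]

lemma le_fract_sub_of_forall_le_abs {x s B D : ℝ} (hx : B - D ≤ x) (hx' : x < D)
    (hs : ∀ N : ℤ, D ≤ |s - N|) : B ≤ Int.fract (x - s) := by
  by_contra! h
  have e : s - ((-⌊x - s⌋ : ℤ) : ℝ) = x - Int.fract (x - s) := by
    rw [← Int.self_sub_floor]; push_cast; ring
  have := hs (-⌊x - s⌋)
  rw [e] at this
  linarith [abs_lt.2 (⟨by linarith, by linarith [Int.fract_nonneg (x - s)]⟩ :
    -D < x - Int.fract (x - s) ∧ x - Int.fract (x - s) < D)]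

end Rotation

section Orbits

variable {α : ℝ} {a : ℕ → ℕ}

lemma le_fract_sub_of_window (hirr : Irrational α)
    (hcf : Tendsto (fun N => (cfNum a N : ℝ) / cfDen a N) atTop (𝓝 α))
    (m : ℕ) {z : ℝ} (hC : |cfErr α a m| ≤ 1) (hz : 0 ≤ z) (hz' : z < |cfErr α a (m + 1)|)
    (hw : |cfErr α a (m + 1)| - |cfErr α a m| ≤ z - cfErr α a (m + 2))
    (hw' : z - cfErr α a (m + 2) < |cfErr α a m|)
    (hw'' : z - cfErr α a (m + 2) < 0 ∨ |cfErr α a (m + 1)| ≤ z - cfErr α a (m + 2))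
    (j : ℕ) (hj : 0 < j) (hj' : j < cfDen a (m + 2) + cfDen a (m + 1)) :
    |cfErr α a (m + 1)| ≤ Int.fract (z - j * α) := by
  set w := z - cfErr α a (m + 2)
  rcases lt_trichotomy j (cfDen a (m + 2)) with hlt | rfl | hgt
  · exact le_fract_sub_of_forall_le_abs (by linarith) hz'
      fun N => abs_cfErr_le_abs_mul_sub hirr hcf (m + 1) N hj hlt
  · have e : Int.fract (z - cfDen a (m + 2) * α) = Int.fract w :=
      Int.fract_eq_fract.2 ⟨-cfNum a (m + 2), by simp only [w, cfErr]; push_cast; ring⟩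
    rw [e]
    rcases hw'' with hneg | hpos
    · rw [← Int.fract_add_one, Int.fract_eq_self.2 ⟨by linarith, by linarith⟩]
      linarith
    · rw [Int.fract_eq_self.2 ⟨by linarith [abs_nonneg (cfErr α a (m + 1))], by linarith⟩]
      exact hpos
  · -- past `q_{m+2}` the orbit of `z` continues as that of `w`, now compared with `‖q_m α‖`
    obtain ⟨j', rfl⟩ : ∃ j', j = cfDen a (m + 2) + j' := ⟨j - cfDen a (m + 2), by omega⟩
    have e : Int.fract (z - (cfDen a (m + 2) + j' : ℕ) * α) = Int.fract (w - j' * α) :=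
      Int.fract_eq_fract.2 ⟨-cfNum a (m + 2), by simp only [w, cfErr]; push_cast; ring⟩
    rw [e]
    exact le_fract_sub_of_forall_le_abs hw hw'
      fun N => abs_cfErr_le_abs_mul_sub hirr hcf m N (by omega) (by omega)

/-- The interval consists of the points whose return time to `[0, ‖q_{m+1} α‖)` under
`z ↦ z - α` is the longest gap `q_{m+2} + q_{m+1}` of the three-gap theorem. -/
lemma exists_forall_le_fract_sub (hirr : Irrational α)
    (hcf : Tendsto (fun N => (cfNum a N : ℝ) / cfDen a N) atTop (𝓝 α))
    (ha : ∀ n, 1 ≤ a (n + 2)) (m : ℕ) :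
    ∃ c, ∀ z, c ≤ z → z < c + |cfErr α a (m + 2)| → ∀ j : ℕ, 0 < j →
      j < cfDen a (m + 2) + cfDen a (m + 1) →
        |cfErr α a (m + 1)| ≤ Int.fract (z - j * α) := by
  have hsum := abs_cfErr_add_le hirr hcf ha m
  have hanti : |cfErr α a (m + 2)| ≤ |cfErr α a (m + 1)| :=
    antitone_abs_cfErr hirr hcf ha (Nat.le_succ _)
  have hC := (abs_cfErr_lt_one hirr hcf ha m).le
  have hne : cfErr α a (m + 2) ≠ 0 := fun h => by
    simpa [h] using neg_one_pow_mul_cfErr_pos hirr hcf (m + 2)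
  rcases hne.lt_or_gt with hneg | hpos
  · rw [abs_of_neg hneg] at hsum hanti ⊢
    refine ⟨|cfErr α a (m + 1)| + cfErr α a (m + 2), fun z hz hz' =>
      le_fract_sub_of_window hirr hcf m hC ?_ ?_ ?_ ?_ (Or.inr ?_)⟩ <;> linarith
  · rw [abs_of_pos hpos] at hsum hanti ⊢
    refine ⟨0, fun z hz hz' =>
      le_fract_sub_of_window hirr hcf m hC ?_ ?_ ?_ ?_ (Or.inl ?_)⟩ <;> linarith

lemma exists_forall_exists_le_fract_sub_lt (hirr : Irrational α)
    (hcf : Tendsto (fun N => (cfNum a N : ℝ) / cfDen a N) atTop (𝓝 α))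
    (ha : ∀ n, 1 ≤ a (n + 2)) (m : ℕ) :
    ∃ T : ℕ, ∀ y : ℝ, ∃ i ≤ T, Int.fract (y - i * α) < |cfErr α a m| := by
  have hpos : 0 < cfErr α a (2 * m) := by
    simpa [pow_mul] using neg_one_pow_mul_cfErr_pos hirr hcf (2 * m)
  have hle : cfErr α a (2 * m) ≤ |cfErr α a m| :=
    (le_abs_self _).trans (antitone_abs_cfErr hirr hcf ha (by omega))
  refine ⟨⌊1 / cfErr α a (2 * m)⌋₊ * cfDen a (2 * m), fun y => ?_⟩
  obtain ⟨j, hj, hfr⟩ := exists_nat_le_one_div_and_fract_sub_lt hpos y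
  refine ⟨j * cfDen a (2 * m), Nat.mul_le_mul_right _ (Nat.le_floor hj), ?_⟩
  have e : Int.fract (y - (j * cfDen a (2 * m) : ℕ) * α) =
      Int.fract (y - j * cfErr α a (2 * m)) :=
    Int.fract_eq_fract.2 ⟨-(j * cfNum a (2 * m)), by simp only [cfErr]; push_cast; ring⟩
  rw [e]
  exact hfr.trans_le hle

end Orbits

section Words

variable {σ : Type*}

def block (u : ℕ → σ) (i L : ℕ) : List σ := (List.range L).map fun k => u (i + k)

@[simp]
lemma length_block (u : ℕ → σ) (i L : ℕ) : (block u i L).length = L := by simp [block]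

lemma factorAt_block (u : ℕ → σ) (i L : ℕ) : FactorAt u (block u i L) i := by
  rw [FactorAt, length_block, block]

lemma FactorAt.getElem?_eq {u : ℕ → σ} {v : List σ} {i k : ℕ} (hv : FactorAt u v i)
    (hk : k < v.length) : v[k]? = some (u (i + k)) := by
  rw [hv, List.getElem?_map, List.getElem?_range hk]
  rfl

lemma apply_eq_apply_mod_of_forall_lt {u : ℕ → σ} {i q L : ℕ} (hq : 0 < q)
    (h : ∀ k < L, u (i + k + q) = u (i + k)) : ∀ k < q + L, u (i + k) = u (i + k % q) := by
  intro k
  induction k using Nat.strong_induction_on with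
  | _ k ih =>
    intro hk
    rcases lt_or_ge k q with hkq | hkq
    · rw [Nat.mod_eq_of_lt hkq]
    · obtain ⟨k', rfl⟩ : ∃ k', k = k' + q := ⟨k - q, by omega⟩
      rw [← add_assoc, h k' (by omega), ih k' (by omega) (by omega), Nat.add_mod_right]

lemma fracPow_block {u : ℕ → σ} {i q L : ℕ} (hq : 0 < q)
    (h : ∀ k < L, u (i + k + q) = u (i + k)) : FracPow (block u i q) (block u i (q + L)) := by
  refine ⟨List.ne_nil_of_length_pos (by simpa using hq), by simp, fun k hk => ?_⟩
  simp only [length_block] at hk ⊢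
  rw [(factorAt_block u i _).getElem?_eq (by simpa using hk),
    (factorAt_block u i q).getElem?_eq (by simpa using Nat.mod_lt k hq),
    apply_eq_apply_mod_of_forall_lt hq h k hk]

lemma FactorAt.apply_add_length {u : ℕ → σ} {v w : List σ} {i k : ℕ} (hv : FactorAt u v i)
    (hvw : FracPow w v) (hk : k + w.length < v.length) :
    u (i + k + w.length) = u (i + k) := by
  obtain ⟨-, -, hper⟩ := hvw
  have h1 := hper k (by omega)
  have h2 := hper (k + w.length) hk
  rw [Nat.add_mod_right, ← h1, hv.getElem?_eq hk, hv.getElem?_eq (by omega)] at h2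
  rw [add_assoc]
  exact Option.some.inj h2

lemma bddAbove_expSet {u : ℕ → σ} {w : List σ}
    (h : ∃ T, ∀ i, ∃ k ≤ T, u (i + k + w.length) ≠ u (i + k)) :
    BddAbove (expSet u w) := by
  obtain ⟨T, hT⟩ := h
  refine ⟨T + w.length, ?_⟩
  rintro r ⟨v, ⟨i, hv⟩, hvw, rfl⟩
  obtain ⟨k, hkT, hk⟩ := hT i
  have hlen : v.length ≤ T + w.length := by
    by_contra! hlt
    exact hk (hv.apply_add_length hvw (by omega))
  have hw : (1 : ℝ) ≤ w.length := by
    exact_mod_cast List.length_pos_iff.2 hvw.1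
  calc (v.length : ℝ) / w.length ≤ v.length := div_le_self (Nat.cast_nonneg _) hw
    _ ≤ T + w.length := by exact_mod_cast hlen

end Words

section SturmianShift

variable {α : ℝ} {a : ℕ → ℕ}

lemma sturmianWord_apply (α x₀ : ℝ) (k : ℕ) :
    sturmianWord α x₀ k = decide (Int.fract (x₀ - k * α) < α) := by
  rw [sturmianWord]
  congr 2
  exact Int.fract_eq_fract.2 ⟨k, by push_cast; ring⟩

lemma sturmianWord_add_cfDen (α x₀ : ℝ) (a : ℕ → ℕ) (m k : ℕ) :
    sturmianWord α x₀ (k + cfDen a m) =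
      decide (Int.fract (x₀ - k * α - cfErr α a m) < α) := by
  rw [sturmianWord_apply]
  congr 2
  exact Int.fract_eq_fract.2 ⟨-cfNum a m, by simp only [cfErr]; push_cast; ring⟩

lemma exists_sturmianWord_add_cfDen_ne_iff (hirr : Irrational α)
    (hcf : Tendsto (fun N => (cfNum a N : ℝ) / cfDen a N) atTop (𝓝 α))
    (ha : ∀ n, 1 ≤ a (n + 2)) (x₀ : ℝ) (m : ℕ) :
    ∃ y, ∀ k : ℕ, sturmianWord α x₀ (k + cfDen a (m + 1)) ≠ sturmianWord α x₀ k ↔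
      Int.fract (y - k * α) < |cfErr α a (m + 1)| ∨
        Int.fract (y - (k + 1) * α) < |cfErr α a (m + 1)| := by
  have hBα := abs_cfErr_le hirr hcf ha (m + 1)
  have hB1 := abs_cfErr_succ_le hirr hcf ha m
  have hne : cfErr α a (m + 1) ≠ 0 := fun h => by
    simpa [h] using neg_one_pow_mul_cfErr_pos hirr hcf (m + 1)
  have hB := abs_pos.2 hne
  rcases hne.lt_or_gt with hneg | hpos
  · -- the shift moves points forward, so the criterion is read from the shifted point
    refine ⟨x₀ + |cfErr α a (m + 1)|, fun k => ?_⟩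
    have h := decide_fract_sub_lt_ne_iff (x₀ + |cfErr α a (m + 1)| - k * α) hB hBα hB1
    rw [sturmianWord_add_cfDen, sturmianWord_apply, ne_comm]
    rw [abs_of_neg hneg] at h ⊢
    convert h using 4 <;> ring_nf
  · refine ⟨x₀, fun k => ?_⟩
    have h := decide_fract_sub_lt_ne_iff (x₀ - k * α) hB hBα hB1
    rw [sturmianWord_add_cfDen, sturmianWord_apply]
    rw [abs_of_pos hpos] at h ⊢
    convert h using 4; ring_nf

lemma exists_sturmianWord_add_cfDen_eq (hirr : Irrational α)
    (hcf : Tendsto (fun N => (cfNum a N : ℝ) / cfDen a N) atTop (𝓝 α))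
    (ha : ∀ n, 1 ≤ a (n + 2)) (x₀ : ℝ) (m : ℕ) :
    ∃ i, ∀ k, k + 2 < cfDen a (m + 2) + cfDen a (m + 1) →
      sturmianWord α x₀ (i + k + cfDen a (m + 1)) = sturmianWord α x₀ (i + k) := by
  obtain ⟨y, hy⟩ := exists_sturmianWord_add_cfDen_ne_iff hirr hcf ha x₀ m
  obtain ⟨c, hc⟩ := exists_forall_le_fract_sub hirr hcf ha m
  obtain ⟨T, hT⟩ := exists_forall_exists_le_fract_sub_lt hirr hcf ha (m + 2)
  obtain ⟨i, -, hi⟩ := hT (y + α - c)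
  set z := c + Int.fract (y + α - c - i * α)
  have hz := hc z (by linarith [Int.fract_nonneg (y + α - c - i * α)]) (by linarith)
  have hshift :
      ∀ j : ℕ, Int.fract (y - (i + j : ℕ) * α) = Int.fract (z - (j + 1 : ℕ) * α) :=
    fun j => Int.fract_eq_fract.2 ⟨⌊y + α - c - i * α⌋, by
      simp only [z]; rw [← Int.self_sub_fract]; push_cast; ring⟩
  refine ⟨i, fun k hk => not_not.1 fun hne => ?_⟩
  rcases (hy (i + k)).1 hne with h | h
  · rw [hshift] at h
    exact (hz (k + 1) (by omega) (by omega)).not_gt h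
  · have e : ((i + k : ℕ) : ℝ) + 1 = (i + (k + 1) : ℕ) := by push_cast; ring
    rw [e, hshift] at h
    exact (hz (k + 1 + 1) (by omega) (by omega)).not_gt h

lemma exists_sturmianWord_add_cfDen_ne (hirr : Irrational α)
    (hcf : Tendsto (fun N => (cfNum a N : ℝ) / cfDen a N) atTop (𝓝 α))
    (ha : ∀ n, 1 ≤ a (n + 2)) (x₀ : ℝ) (m : ℕ) :
    ∃ T, ∀ i, ∃ k ≤ T,
      sturmianWord α x₀ (i + k + cfDen a (m + 1)) ≠ sturmianWord α x₀ (i + k) := by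
  obtain ⟨y, hy⟩ := exists_sturmianWord_add_cfDen_ne_iff hirr hcf ha x₀ m
  obtain ⟨T, hT⟩ := exists_forall_exists_le_fract_sub_lt hirr hcf ha (m + 1)
  refine ⟨T, fun i => ?_⟩
  obtain ⟨k, hkT, hk⟩ := hT (y - i * α)
  refine ⟨k, hkT, (hy (i + k)).2 (Or.inl ?_)⟩
  rwa [Nat.cast_add, add_mul, ← sub_sub]

end SturmianShift

theorem index_lower_bound_general (α x₀ : ℝ) (hirr : Irrational α)
    (a p q : ℕ → ℕ) (hapos : ∀ n, 1 ≤ n → 1 ≤ a n)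
    (hq0 : q 0 = 1) (hq1 : q 1 = 1)
    (hqrec : ∀ N, q (N + 2) = a (N + 2) * q (N + 1) + q N)
    (hp0 : p 0 = 0) (hp1 : p 1 = 1)
    (hprec : ∀ N, p (N + 2) = a (N + 2) * p (N + 1) + p N)
    (hcf : Tendsto (fun N => (p N : ℝ) / (q N : ℝ)) atTop (nhds α)) (N : ℕ) (hN : 1 ≤ N) :
    ∃ w : List Bool, IsFactor (sturmianWord α x₀) w ∧ w.length = q N ∧
      2 + (a (N + 1) : ℝ) + ((q (N - 1) : ℝ) - 2) / (q N : ℝ) ≤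
        index (sturmianWord α x₀) w := by
  obtain rfl : q = cfDen a := eq_of_two_step_rec hq0 hq1 hqrec fun _ => rfl
  obtain rfl : p = cfNum a := eq_of_two_step_rec hp0 hp1 hprec fun _ => rfl
  obtain ⟨n, rfl⟩ : ∃ n, N = n + 1 := ⟨N - 1, by omega⟩
  have ha : ∀ n, 1 ≤ a (n + 2) := fun n => hapos (n + 2) (by omega)
  set u := sturmianWord α x₀
  obtain ⟨i, hper⟩ := exists_sturmianWord_add_cfDen_eq hirr hcf ha x₀ n
  set w := block u i (cfDen a (n + 1))
  set L := cfDen a (n + 2) + cfDen a (n + 1) - 2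
  have hmem : ((cfDen a (n + 1) + L : ℕ) : ℝ) / cfDen a (n + 1) ∈ expSet u w :=
    ⟨block u i (cfDen a (n + 1) + L), ⟨i, factorAt_block u i _⟩,
      fracPow_block (cfDen_pos a _) fun k hk => hper k (by omega), by simp [w]⟩
  have hbdd : BddAbove (expSet u w) :=
    bddAbove_expSet (by simpa [w] using exists_sturmianWord_add_cfDen_ne hirr hcf ha x₀ n)
  refine ⟨w, ⟨i, factorAt_block u i _⟩, length_block u i _, ?_⟩
  calc 2 + (a (n + 1 + 1) : ℝ) + ((cfDen a (n + 1 - 1) : ℝ) - 2) / cfDen a (n + 1)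
      = ((cfDen a (n + 1) + L : ℕ) : ℝ) / cfDen a (n + 1) := two_add_div_cfDen_eq a n
    _ ≤ index u w := le_csSup hbdd hmem

/-- for every `N ≥ 1` a Sturmian word of slope `α = [0,1,a₂,a₃,…]`
has a factor `w` of length `q_N` with `ind(w) ≥ 2 + a_{N+1} + (q_{N−1} − 2)/q_N`. -/
theorem index_lower_bound (α x₀ : ℝ) (hirr : Irrational α)
    (hα : 1/2 < α) (hα1 : α < 1) (hx0 : 0 ≤ x₀) (hx1 : x₀ < 1)
    (a p q : ℕ → ℕ) (ha1 : a 1 = 1) (hapos : ∀ n, 1 ≤ n → 1 ≤ a n)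
    (hq0 : q 0 = 1) (hq1 : q 1 = 1)
    (hqrec : ∀ N, q (N + 2) = a (N + 2) * q (N + 1) + q N)
    (hp0 : p 0 = 0) (hp1 : p 1 = 1)
    (hprec : ∀ N, p (N + 2) = a (N + 2) * p (N + 1) + p N)
    (hcf : Tendsto (fun N => (p N : ℝ) / (q N : ℝ)) atTop (nhds α)) (N : ℕ) (hN : 1 ≤ N) :
    ∃ w : List Bool, IsFactor (sturmianWord α x₀) w ∧ w.length = q N ∧
      2 + (a (N + 1) : ℝ) + ((q (N - 1) : ℝ) - 2) / (q N : ℝ) ≤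
        index (sturmianWord α x₀) w :=
  index_lower_bound_general α x₀ hirr a p q hapos hq0 hq1 hqrec hp0 hp1 hprec hcf N hN

end SturmianPaper
end

section
/- Let u be a uniformly recurrent infinite word and w any factor of u. Then every return word of w in u is a primitive word. -/
open Filter Topology

namespace List

variable {α : Type*}

theorem length_flatten_replicate (z : List α) (n : ℕ) :
    (replicate n z).flatten.length = n * z.length := by
  simp [length_flatten]

theorem flatten_replicate_add (z : List α) (m n : ℕ) :
    (replicate (m + n) z).flatten = (replicate m z).flatten ++ (replicate n z).flatten := by
  rw [replicate_add, flatten_append]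

theorem flatten_replicate_comm (z : List α) (m n : ℕ) :
    (replicate m z).flatten ++ (replicate n z).flatten =
      (replicate n z).flatten ++ (replicate m z).flatten := by
  rw [← flatten_replicate_add, ← flatten_replicate_add, Nat.add_comm]

theorem prefix_flatten_replicate_mul_append {w z : List α} {k : ℕ}
    (h : w <+: (replicate k z).flatten ++ w) (n : ℕ) :
    w <+: (replicate (k * n) z).flatten ++ w := by
  induction n with
  | zero => simp
  | succ n ih =>
    rw [Nat.mul_succ, Nat.add_comm, flatten_replicate_add, append_assoc]
    exact h.trans ((prefix_append_right_inj _).mpr ih)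

/-- Both `w` and `z ^ j ++ w` are prefixes of `z ^ (j + N)`. -/
theorem prefix_flatten_replicate_append_of_prefix_flatten_replicate {w z : List α} {N : ℕ}
    (h : w <+: (replicate N z).flatten) (j : ℕ) :
    w <+: (replicate j z).flatten ++ w := by
  have hw : w <+: (replicate j z).flatten ++ (replicate N z).flatten := by
    rw [flatten_replicate_comm]
    exact h.trans (prefix_append _ _)
  exact prefix_of_prefix_length_le hw ((prefix_append_right_inj _).mpr h) (by simp)

theorem prefix_flatten_replicate_append_of_prefix_flatten_replicate_append
    {w z : List α} {k : ℕ} (hz : z ≠ []) (hk : 0 < k)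
    (h : w <+: (replicate k z).flatten ++ w) (j : ℕ) :
    w <+: (replicate j z).flatten ++ w := by
  have hlong : w.length ≤ (replicate (k * w.length) z).flatten.length := by
    rw [length_flatten_replicate]
    exact (Nat.le_mul_of_pos_left _ hk).trans (Nat.le_mul_of_pos_right _ (length_pos_iff.mpr hz))
  have hpow : w <+: (replicate (k * w.length) z).flatten :=
    prefix_of_prefix_length_le (prefix_flatten_replicate_mul_append h _) (prefix_append _ _) hlong
  exact prefix_flatten_replicate_append_of_prefix_flatten_replicate hpow j

end List

namespace SturmianPaper

variable {A : Type*} [DecidableEq A]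

theorem card_le_occCount {x w : List A} (s : Finset ℕ)
    (hs : ∀ i ∈ s, i ≤ x.length ∧ w <+: x.drop i) :
    s.card ≤ occCount x w := by
  have hfilter :
      occCount x w = ((Finset.range (x.length + 1)).filter fun i => w <+: x.drop i).card := rfl
  rw [hfilter]
  refine Finset.card_le_card fun i hi => ?_
  simp only [Finset.mem_filter, Finset.mem_range]
  exact ⟨Nat.lt_succ_of_le (hs i hi).1, (hs i hi).2⟩

/-- If `v = z ^ (m + 2)`, then `w` occurs in `v ++ w` at `0`, `|z|` and `|v|`: the occurrence
at `|z|` holds because `w <+: z ^ (m + 2) ++ w` forces `w` to be a prefix of `z ^ ω`. -/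
theorem return_word_primitive_general {A : Type*} [DecidableEq A]
    (u : ℕ → A)
    (w : List A) (v : List A) (hv : IsReturnWord u w v) :
    Primitive v := by
  obtain ⟨hne, -, hpre, hocc⟩ := hv
  refine ⟨hne, fun z k hk hvz => ?_⟩
  obtain ⟨m, rfl⟩ : ∃ m, k = m + 2 := ⟨k - 2, by omega⟩
  have hz : z ≠ [] := by rintro rfl; exact hne (by simpa using hvz)
  have hz0 : 0 < z.length := List.length_pos_iff.mpr hz
  have hzv : z.length < v.length := by
    rw [hvz, List.length_flatten_replicate]
    nlinarith
  have hshift : w <+: (v ++ w).drop z.length := by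
    rw [hvz, show m + 2 = 1 + (m + 1) by omega, List.flatten_replicate_add, List.replicate_one,
      List.flatten_singleton, List.append_assoc, List.drop_left]
    exact List.prefix_flatten_replicate_append_of_prefix_flatten_replicate_append hz
      (by omega) (hvz ▸ hpre) (m + 1)
  have hthree := card_le_occCount (x := v ++ w) (w := w) {0, z.length, v.length} (by
    simp only [Finset.mem_insert, Finset.mem_singleton]
    rintro i (rfl | rfl | rfl)
    · simpa using hpre
    · exact ⟨by simp only [List.length_append]; omega, hshift⟩
    · simp)
  rw [Finset.card_insert_of_notMem (by simp only [Finset.mem_insert, Finset.mem_singleton]; omega),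
    Finset.card_pair hzv.ne] at hthree
  omega

/-- every return word of a factor of a uniformly recurrent word is
primitive. -/
theorem return_word_primitive {A : Type*} [DecidableEq A]
    (u : ℕ → A) (hur : UniformlyRecurrent u)
    (w : List A) (hw : IsFactor u w) (v : List A) (hv : IsReturnWord u w v) :
    Primitive v :=
  return_word_primitive_general u w v hv

end SturmianPaper
end
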